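/- Suppose that for every δ > 0 there exists ε > 0 (depending only on δ and p−1) such that every system of ℓ−1 linear equations of rank ℓ−1 in p−1 unknowns over any finite field has the generalized removal property with these parameters. Let F be a finite field of size n, let M be an ℓ×p matrix over F whose last ℓ columns form the ℓ×ℓ identity matrix, let b ∈ F^ℓ, and suppose some row of M has at most 2 nonzero entries. Then Mx = b has the generalized removal property: for every δ > 0 there exists ε > 0 (depending only on δ and p) such that whenever S₁,...,S_p ⊆ F contain fewer than ε·n^(p−ℓ) solutions x ∈ S₁ × ... × S_p to Mx = b, one can remove at most δ·n elements from each S_i so that the resulting sets contain no solution to Mx = b. -/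
import Mathlib


/-- The number of solutions `x ∈ S₁ × ⋯ × S_p` of `Mx = b`. -/
def solutionCount {F : Type*} [Fintype F] [DecidableEq F] [CommRing F]
    {ℓ p : ℕ} (M : Matrix (Fin ℓ) (Fin p) F) (b : Fin ℓ → F)
    (S : Fin p → Finset F) : ℕ :=
  ((Fintype.piFinset S).filter (fun x => M.mulVec x = b)).card

/-- The system `Mx = b` over the finite field `F` of size `n` has the
generalized removal property with parameters `(ε, δ)`: whenever
`S₁, …, S_p ⊆ F` contain fewer than `ε·n^(p-ℓ)` solutions of `Mx = b`, one can
remove at most `δ·n` elements from each `Sᵢ` to obtain sets containing no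
solution. -/
def HasGeneralizedRemoval (ε δ : ℝ) {F : Type} [Field F] [Fintype F]
    [DecidableEq F] {ℓ p : ℕ} (M : Matrix (Fin ℓ) (Fin p) F)
    (b : Fin ℓ → F) : Prop :=
  ∀ S : Fin p → Finset F,
    ((solutionCount M b S : ℝ) < ε * (Fintype.card F : ℝ) ^ (p - ℓ)) →
    ∃ S' : Fin p → Finset F,
      (∀ i, S' i ⊆ S i ∧ ((S i \ S' i).card : ℝ) ≤ δ * (Fintype.card F : ℝ)) ∧
      ∀ x : Fin p → F, (∀ i, x i ∈ S' i) → M.mulVec x ≠ b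

namespace RemovalAux

/-- The increasing embedding `Fin (q-1) → Fin q` skipping `t`. -/
def skipF {q : ℕ} (t : Fin q) (m : Fin (q - 1)) : Fin q :=
  if m.val < t.val then ⟨m.val, by omega⟩ else ⟨m.val + 1, by have := m.isLt; omega⟩

lemma skipF_val {q : ℕ} (t : Fin q) (m : Fin (q - 1)) :
    (skipF t m).val = if m.val < t.val then m.val else m.val + 1 := by
  unfold skipF; split_ifs <;> rfl

lemma skipF_ne {q : ℕ} (t : Fin q) (m : Fin (q - 1)) : skipF t m ≠ t := by
  intro h
  have := congrArg Fin.val h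
  rw [skipF_val] at this
  split_ifs at this <;> omega

lemma skipF_injective {q : ℕ} (t : Fin q) : Function.Injective (skipF t) := by
  intro a b hab
  have := congrArg Fin.val hab
  rw [skipF_val, skipF_val] at this
  apply Fin.ext
  split_ifs at this <;> omega

lemma exists_skipF {q : ℕ} (t s : Fin q) (h : s ≠ t) : ∃ m, skipF t m = s := by
  have hvs := s.isLt; have hvt := t.isLt
  have hne : s.val ≠ t.val := fun hh => h (Fin.ext hh)
  by_cases hlt : s.val < t.val
  · exact ⟨⟨s.val, by omega⟩, Fin.ext (by rw [skipF_val]; simp [hlt])⟩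
  · refine ⟨⟨s.val - 1, by omega⟩, Fin.ext ?_⟩
    rw [skipF_val]
    simp only
    rw [if_neg (by omega)]
    omega

/-- The "inverse" of `skipF`, defined for all of `Fin q` (junk value at `t`). -/
def unskipF {q : ℕ} (hq : 2 ≤ q) (t s : Fin q) : Fin (q - 1) :=
  if h : s.val < t.val then ⟨s.val, by have := t.isLt; omega⟩
  else ⟨s.val - 1, by have := s.isLt; omega⟩

lemma unskipF_val {q : ℕ} (hq : 2 ≤ q) (t s : Fin q) :
    (unskipF hq t s).val = if s.val < t.val then s.val else s.val - 1 := by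
  unfold unskipF; split_ifs <;> rfl

lemma skipF_unskipF {q : ℕ} (hq : 2 ≤ q) (t s : Fin q) (h : s ≠ t) :
    skipF t (unskipF hq t s) = s := by
  have hne : s.val ≠ t.val := fun hh => h (Fin.ext hh)
  have hvs := s.isLt
  apply Fin.ext
  rw [skipF_val, unskipF_val]
  split_ifs <;> omega

lemma unskipF_skipF {q : ℕ} (hq : 2 ≤ q) (t : Fin q) (m : Fin (q - 1)) :
    unskipF hq t (skipF t m) = m :=
  skipF_injective t (skipF_unskipF hq t (skipF t m) (skipF_ne t m))

lemma sum_skipF {q : ℕ} {α : Type*} [AddCommMonoid α] (t : Fin q) (f : Fin q → α) :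
    ∑ m, f m = f t + ∑ m, f (skipF t m) := by
  rw [← Finset.add_sum_erase _ f (Finset.mem_univ t)]
  congr 1
  refine (Finset.sum_bij (fun m _ => skipF t m) ?_ ?_ ?_ ?_).symm
  · intro a _; exact Finset.mem_erase.2 ⟨skipF_ne t a, Finset.mem_univ _⟩
  · intro a _ b _ h; exact skipF_injective t h
  · intro s hs
    obtain ⟨m, hm⟩ := exists_skipF t s (Finset.mem_erase.1 hs).1
    exact ⟨m, Finset.mem_univ _, hm⟩
  · intro a _; rfl

end RemovalAux

open RemovalAux in
/-- Claim 3.1. -/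
theorem row_with_few_nonzero_entries_removal
    (p ℓ : ℕ) (hℓ : 1 ≤ ℓ) (hℓp : ℓ ≤ p)
    (IH : ∀ δ : ℝ, 0 < δ → ∃ ε : ℝ, 0 < ε ∧
      ∀ (F : Type) [Field F] [Fintype F] [DecidableEq F],
        ∀ (M' : Matrix (Fin (ℓ - 1)) (Fin (p - 1)) F) (b' : Fin (ℓ - 1) → F),
          M'.rank = ℓ - 1 → HasGeneralizedRemoval ε δ M' b') :
    ∀ δ : ℝ, 0 < δ → ∃ ε : ℝ, 0 < ε ∧
      ∀ (F : Type) [Field F] [Fintype F] [DecidableEq F],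
        ∀ (M : Matrix (Fin ℓ) (Fin p) F) (b : Fin ℓ → F),
          -- the last `ℓ` columns of `M` form the `ℓ × ℓ` identity matrix
          (∀ i j : Fin ℓ,
            M i ⟨p - ℓ + j.val, by have := j.isLt; omega⟩ =
              if i = j then 1 else 0) →
          -- some row of `M` has at most 2 nonzero entries
          (∃ i : Fin ℓ, (Finset.univ.filter fun j => M i j ≠ 0).card ≤ 2) →
          HasGeneralizedRemoval ε δ M b := by
  intro δ hδ
  obtain ⟨ε', hε', hIH⟩ := IH δ hδ
  refine ⟨min ε' 1, lt_min hε' one_pos, ?_⟩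
  intro F _ _ _ M b hIdent hRow S hS
  set n : ℝ := (Fintype.card F : ℝ) with hn
  have hn0 : (0:ℝ) ≤ n := Nat.cast_nonneg _
  -- trivial case: no solutions at all
  by_cases h0 : solutionCount M b S = 0
  · refine ⟨S, fun i => ⟨subset_rfl, ?_⟩, fun x hx hMx => ?_⟩
    · simp only [Finset.sdiff_self, Finset.card_empty, Nat.cast_zero]
      positivity
    · have hmem : x ∈ (Fintype.piFinset S).filter (fun x => M.mulVec x = b) :=
        Finset.mem_filter.2 ⟨Fintype.mem_piFinset.2 hx, hMx⟩
      have : ((Fintype.piFinset S).filter (fun x => M.mulVec x = b)) = ∅ :=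
        Finset.card_eq_zero.1 h0
      rw [this] at hmem
      exact absurd hmem (Finset.notMem_empty x)
  have h1 : 1 ≤ solutionCount M b S := Nat.one_le_iff_ne_zero.2 h0
  have hp2 : 2 ≤ p := by
    by_contra hp
    have hp1 : p = 1 := by omega
    have hl1 : ℓ = 1 := by omega
    have hpow : n ^ (p - ℓ) = 1 := by rw [show p - ℓ = 0 by omega, pow_zero]
    have h1' : (1:ℝ) ≤ (solutionCount M b S : ℝ) := by exact_mod_cast h1
    have := hS
    rw [hpow, mul_one] at this
    have := lt_of_le_of_lt h1' this
    have := min_le_right ε' (1:ℝ)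
    linarith
  -- set up the special row and column
  obtain ⟨i₀, hRowCard⟩ := hRow
  set k : Fin p := ⟨p - ℓ + i₀.val, by have := i₀.isLt; omega⟩ with hk
  have hcolk : ∀ i : Fin ℓ, M i k = if i = i₀ then 1 else 0 := fun i => hIdent i i₀
  have hMk1 : M i₀ k = 1 := by rw [hcolk, if_pos rfl]
  -- choose the (at most one) other nonzero column j of row i₀
  have hj : ∃ j : Fin p, j ≠ k ∧ ∀ m : Fin p, m ≠ k → m ≠ j → M i₀ m = 0 := by
    by_cases hE : ∃ j : Fin p, M i₀ j ≠ 0 ∧ j ≠ k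
    · obtain ⟨j, hjne, hjk⟩ := hE
      refine ⟨j, hjk, fun m hmk hmj => ?_⟩
      by_contra hm
      have hsub : ({k, j, m} : Finset (Fin p)) ⊆
          Finset.univ.filter (fun j => M i₀ j ≠ 0) := by
        intro a ha
        simp only [Finset.mem_insert, Finset.mem_singleton] at ha
        rcases ha with rfl | rfl | rfl <;>
          simp only [Finset.mem_filter, Finset.mem_univ, true_and]
        · rw [hMk1]; exact one_ne_zero
        · exact hjne
        · exact hm
      have hcard3 : ({k, j, m} : Finset (Fin p)).card = 3 := by
        rw [Finset.card_insert_of_notMem (by simp [hjk.symm, Ne.symm hmk]),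
          Finset.card_insert_of_notMem (by simp [Ne.symm hmj]),
          Finset.card_singleton]
      have := Finset.card_le_card hsub
      omega
    · push_neg at hE
      have hne : ∀ m : Fin p, m ≠ k → M i₀ m = 0 := by
        intro m hm
        by_contra h
        exact hm (hE m h)
      rcases eq_or_ne (⟨0, by omega⟩ : Fin p) k with h0 | h0
      · refine ⟨⟨1, by omega⟩, ?_, fun m hmk _ => hne m hmk⟩
        rw [← h0]
        intro he
        exact one_ne_zero (congrArg Fin.val he)
      · exact ⟨⟨0, by omega⟩, h0, fun m hmk _ => hne m hmk⟩
  obtain ⟨j, hjk, hrow0⟩ := hj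
  set c : F := M i₀ j with hc
  -- row i₀ of the system reads x k + c * x j = b i₀
  have hrow_eq : ∀ x : Fin p → F, M.mulVec x i₀ = x k + c * x j := by
    intro x
    have h1 : M.mulVec x i₀ = ∑ m, M i₀ m * x m := by
      simp [Matrix.mulVec, dotProduct]
    rw [h1, ← Finset.sum_subset (Finset.subset_univ ({k, j} : Finset (Fin p)))
      (fun m _ hm => by
        simp only [Finset.mem_insert, Finset.mem_singleton, not_or] at hm
        rw [hrow0 m hm.1 hm.2, zero_mul]),
      Finset.sum_pair (Ne.symm hjk), hMk1, one_mul]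
  -- the reduced system
  set M' : Matrix (Fin (ℓ - 1)) (Fin (p - 1)) F :=
    fun i' m' => M (skipF i₀ i') (skipF k m') with hM'
  set b' : Fin (ℓ - 1) → F := fun i' => b (skipF i₀ i') with hb'
  have hreduce : ∀ (x : Fin p → F) (i' : Fin (ℓ - 1)),
      M.mulVec x (skipF i₀ i') = M'.mulVec (x ∘ skipF k) i' := by
    intro x i'
    have h1 : M.mulVec x (skipF i₀ i') = ∑ m, M (skipF i₀ i') m * x m := by
      simp [Matrix.mulVec, dotProduct]
    have h2 : M'.mulVec (x ∘ skipF k) i'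
        = ∑ m', M (skipF i₀ i') (skipF k m') * x (skipF k m') := by
      simp [Matrix.mulVec, dotProduct, hM', Function.comp]
    rw [h1, h2, sum_skipF k (fun m => M (skipF i₀ i') m * x m),
      hcolk (skipF i₀ i'), if_neg (skipF_ne i₀ i'), zero_mul, zero_add]
  -- rank of the reduced system
  have hrank : M'.rank = ℓ - 1 := by
    have hcol : ∀ i' : Fin (ℓ - 1),
        ∃ m' : Fin (p - 1), skipF k m' = ⟨p - ℓ + (skipF i₀ i').val,
          by have := (skipF i₀ i').isLt; omega⟩ := by
      intro i'
      apply exists_skipF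
      intro he
      have h1 := congrArg Fin.val he
      simp only [hk] at h1
      have h2 : (skipF i₀ i').val = i₀.val := by omega
      exact skipF_ne i₀ i' (Fin.ext h2)
    choose colInv hcolInv using hcol
    set N : Matrix (Fin (p - 1)) (Fin (ℓ - 1)) F :=
      fun m' i' => if m' = colInv i' then 1 else 0 with hN
    have hMN : M' * N = 1 := by
      ext i' i''
      rw [Matrix.mul_apply]
      simp only [hN, mul_ite, mul_one, mul_zero]
      rw [Finset.sum_ite_eq' Finset.univ (colInv i'')
        (fun m' => M' i' m'), if_pos (Finset.mem_univ _)]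
      rw [hM']
      show M (skipF i₀ i') (skipF k (colInv i'')) = _
      rw [hcolInv i'', hIdent (skipF i₀ i') (skipF i₀ i'')]
      rw [Matrix.one_apply]
      congr 1
      simp only [eq_iff_iff]
      exact ⟨fun h => skipF_injective i₀ h, fun h => by rw [h]⟩
    have hle1 : M'.rank ≤ ℓ - 1 := M'.rank_le_height
    have hge : (ℓ - 1 : ℕ) ≤ M'.rank := by
      have h1 : (M' * N).rank ≤ M'.rank := Matrix.rank_mul_le_left M' N
      rw [hMN, Matrix.rank_one, Fintype.card_fin] at h1
      exact h1
    omega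
  -- reduced sets
  set j' : Fin (p - 1) := unskipF hp2 k j with hj'def
  have hj' : skipF k j' = j := skipF_unskipF hp2 k j hjk
  set T : Finset F := (S j).filter (fun y => b i₀ - c * y ∈ S k) with hT
  set S'' : Fin (p - 1) → Finset F :=
    fun m' => if m' = j' then T else S (skipF k m') with hS''
  have hS''sub : ∀ m', S'' m' ⊆ S (skipF k m') := by
    intro m'
    simp only [hS'']
    split_ifs with h
    · rw [h, hj', hT]; exact Finset.filter_subset _ _
    · exact subset_rfl
  -- the counting bijection
  have hcount : solutionCount M b S = solutionCount M' b' S'' := by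
    unfold solutionCount
    refine Finset.card_bij (fun x _ => x ∘ skipF k) ?_ ?_ ?_
    · intro x hx
      rw [Finset.mem_filter] at hx
      obtain ⟨hxS, hxM⟩ := hx
      rw [Fintype.mem_piFinset] at hxS
      have hxk : x k = b i₀ - c * x j :=
        eq_sub_of_add_eq ((hrow_eq x).symm.trans (congrFun hxM i₀))
      rw [Finset.mem_filter]
      constructor
      · rw [Fintype.mem_piFinset]
        intro m'
        simp only [hS'']
        split_ifs with h
        · rw [h]
          show x (skipF k j') ∈ T
          rw [hj', hT, Finset.mem_filter]
          exact ⟨hxS j, by rw [← hxk]; exact hxS k⟩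
        · exact hxS (skipF k m')
      · funext i'
        show M'.mulVec (x ∘ skipF k) i' = b' i'
        rw [← hreduce x i', congrFun hxM (skipF i₀ i')]
    · intro x₁ hx₁ x₂ hx₂ he
      rw [Finset.mem_filter] at hx₁ hx₂
      have hxk₁ : x₁ k = b i₀ - c * x₁ j :=
        eq_sub_of_add_eq ((hrow_eq x₁).symm.trans (congrFun hx₁.2 i₀))
      have hxk₂ : x₂ k = b i₀ - c * x₂ j :=
        eq_sub_of_add_eq ((hrow_eq x₂).symm.trans (congrFun hx₂.2 i₀))
      funext m
      by_cases hm : m = k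
      · subst hm
        have hxj : x₁ j = x₂ j := by
          have := congrFun he j'
          simpa [Function.comp, hj'] using this
        rw [hxk₁, hxk₂, hxj]
      · obtain ⟨m', hm'⟩ := exists_skipF k m hm
        rw [← hm']
        exact congrFun he m'
    · intro x' hx'
      rw [Finset.mem_filter] at hx'
      obtain ⟨hx'S, hx'M⟩ := hx'
      rw [Fintype.mem_piFinset] at hx'S
      set y : Fin p → F :=
        fun m => if m = k then b i₀ - c * x' j' else x' (unskipF hp2 k m) with hy
      have hcomp : y ∘ skipF k = x' := by
        funext m'
        simp only [hy, Function.comp]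
        rw [if_neg (skipF_ne k m'), unskipF_skipF]
      have hyk : y k = b i₀ - c * x' j' := by simp [hy]
      have hyj : y j = x' j' := by
        simp only [hy]
        rw [if_neg hjk, ← hj', unskipF_skipF]
      have hTj' : x' j' ∈ T := by
        have := hx'S j'
        simpa [hS''] using this
      rw [hT, Finset.mem_filter] at hTj'
      refine ⟨y, ?_, hcomp⟩
      rw [Finset.mem_filter]
      constructor
      · rw [Fintype.mem_piFinset]
        intro m
        by_cases hm : m = k
        · subst hm
          rw [hyk]
          exact hTj'.2
        · have h1 : y m = x' (unskipF hp2 k m) := by simp [hy, hm]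
          have h2 : skipF k (unskipF hp2 k m) = m := skipF_unskipF hp2 k m hm
          have := hS''sub (unskipF hp2 k m) (hx'S (unskipF hp2 k m))
          rw [h2] at this
          rw [h1]
          exact this
      · funext i
        by_cases hi : i = i₀
        · subst hi
          rw [hrow_eq y, hyk, hyj]
          ring
        · obtain ⟨i', hi'⟩ := exists_skipF i₀ i hi
          rw [← hi', hreduce y i', hcomp]
          exact congrFun hx'M i'
  -- apply the induction hypothesis to the reduced system
  have hlt : (solutionCount M' b' S'' : ℝ) < ε' * n ^ ((p - 1) - (ℓ - 1)) := by
    rw [← hcount, show (p - 1) - (ℓ - 1) = p - ℓ by omega]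
    calc (solutionCount M b S : ℝ) < min ε' 1 * n ^ (p - ℓ) := hS
      _ ≤ ε' * n ^ (p - ℓ) := by
          apply mul_le_mul_of_nonneg_right (min_le_left _ _)
          positivity
  obtain ⟨T', hT'sub, hT'no⟩ := hIH F M' b' hrank S'' hlt
  -- build the removal sets for the original system
  set S' : Fin p → Finset F := fun m =>
    if m = k then S k
    else if m = j then S j \ (T \ T' j')
    else T' (unskipF hp2 k m) with hS'
  have hS'k : S' k = S k := by simp [hS']
  have hS'j : S' j = S j \ (T \ T' j') := by
    simp [hS', hjk]
  have hS'other : ∀ m, m ≠ k → m ≠ j → S' m = T' (unskipF hp2 k m) := by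
    intro m h1 h2
    simp only [hS']
    rw [if_neg h1, if_neg h2]
  have hS''other : ∀ m, (hmk : m ≠ k) → m ≠ j → S'' (unskipF hp2 k m) = S m := by
    intro m hmk hmj
    have h1 : skipF k (unskipF hp2 k m) = m := skipF_unskipF hp2 k m hmk
    have h2 : unskipF hp2 k m ≠ j' := by
      intro he
      apply hmj
      rw [← h1, he, hj']
    simp only [hS'']
    rw [if_neg h2, h1]
  refine ⟨S', fun m => ?_, ?_⟩
  · by_cases hm : m = k
    · subst hm
      rw [hS'k]
      refine ⟨subset_rfl, ?_⟩
      simp only [Finset.sdiff_self, Finset.card_empty, Nat.cast_zero]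
      positivity
    · by_cases hm2 : m = j
      · rw [hm2, hS'j]
        refine ⟨Finset.sdiff_subset, ?_⟩
        have h1 : S j \ (S j \ (T \ T' j')) = S j ∩ (T \ T' j') :=
          Finset.sdiff_sdiff_self_left _ _
        rw [h1]
        have h2 : (S j ∩ (T \ T' j')).card ≤ (T \ T' j').card :=
          Finset.card_le_card Finset.inter_subset_right
        have h3 : (T \ T' j') = S'' j' \ T' j' := by
          simp [hS'']
        calc ((S j ∩ (T \ T' j')).card : ℝ) ≤ ((T \ T' j').card : ℝ) := by
              exact_mod_cast h2
          _ = ((S'' j' \ T' j').card : ℝ) := by rw [h3]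
          _ ≤ δ * n := (hT'sub j').2
      · rw [hS'other m hm hm2]
        constructor
        · exact (hT'sub _).1.trans (by rw [hS''other m hm hm2])
        · rw [← hS''other m hm hm2]
          exact (hT'sub _).2
  · intro x hx hMx
    have hxk : x k = b i₀ - c * x j :=
      eq_sub_of_add_eq ((hrow_eq x).symm.trans (congrFun hMx i₀))
    have hxkS : x k ∈ S k := by
      have := hx k; rwa [hS'k] at this
    have hxjS' : x j ∈ S j \ (T \ T' j') := by
      have := hx j; rwa [hS'j] at this
    have hxjT : x j ∈ T := by
      rw [hT, Finset.mem_filter]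
      exact ⟨(Finset.mem_sdiff.1 hxjS').1, by rw [← hxk]; exact hxkS⟩
    have hxjT' : x j ∈ T' j' := by
      by_contra h
      exact (Finset.mem_sdiff.1 hxjS').2 (Finset.mem_sdiff.2 ⟨hxjT, h⟩)
    apply hT'no (x ∘ skipF k)
    · intro m'
      by_cases hm : m' = j'
      · subst hm
        show x (skipF k j') ∈ T' j'
        rw [hj']
        exact hxjT'
      · have h1 : skipF k m' ≠ k := skipF_ne k m'
        have h2 : skipF k m' ≠ j := by
          intro he
          exact hm (skipF_injective k (he.trans hj'.symm))
        have := hx (skipF k m')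
        rw [hS'other _ h1 h2, unskipF_skipF] at this
        exact this
    · funext i'
      show M'.mulVec (x ∘ skipF k) i' = b' i'
      rw [← hreduce x i', congrFun hMx (skipF i₀ i')]
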